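/- For λ > 2 and a ∈ (0,1/2), if λ ≤ 2/(1-2a) (i.e. d_λ ≤ 2a), then the maximum over d ∈ [2a,1] of F(λ)(1 - 2a/d) - (2a/d)q(d) is attained at d = 2a and equals -q(2a). -/

import Mathlib

noncomputable def entq (d : ℝ) : ℝ :=
  (1 / 2) * ((1 + d) * Real.log (1 + d) + (1 - d) * Real.log (1 - d))

noncomputable def freeEn (l : ℝ) : ℝ := Real.log (l / (2 * Real.sqrt (l - 1)))

open Real

lemma entq_hasDerivAt {x : ℝ} (h1 : -1 < x) (h2 : x < 1) :
    HasDerivAt entq ((1 / 2) * (Real.log (1 + x) - Real.log (1 - x))) x := by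
  have hp : (0:ℝ) < 1 + x := by linarith
  have hm : (0:ℝ) < 1 - x := by linarith
  have d1 : HasDerivAt (fun y : ℝ => (1 + y)) 1 x := by
    simpa using (hasDerivAt_id x).const_add 1
  have d2 : HasDerivAt (fun y : ℝ => (1 - y)) (-1) x := by
    simpa using (hasDerivAt_id x).const_sub 1
  have l1 : HasDerivAt (fun y : ℝ => Real.log (1 + y)) (1 / (1 + x)) x := by
    simpa [Function.comp_def] using (Real.hasDerivAt_log hp.ne').comp x d1
  have l2 : HasDerivAt (fun y : ℝ => Real.log (1 - y)) (-(1 / (1 - x))) x := by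
    have := (Real.hasDerivAt_log hm.ne').comp x d2
    simpa [div_eq_mul_inv, Function.comp_def] using this
  have m1 : HasDerivAt (fun y : ℝ => (1 + y) * Real.log (1 + y))
      (1 * Real.log (1 + x) + (1 + x) * (1 / (1 + x))) x := d1.mul l1
  have m2 : HasDerivAt (fun y : ℝ => (1 - y) * Real.log (1 - y))
      ((-1) * Real.log (1 - x) + (1 - x) * (-(1 / (1 - x)))) x := d2.mul l2
  have := ((m1.add m2).const_mul (1/2 : ℝ))
  refine this.congr_deriv ?_
  rw [mul_one_div_cancel hp.ne', mul_neg, mul_one_div_cancel hm.ne']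
  ring

lemma entq_continuous : Continuous entq := by
  have h1 : Continuous fun x : ℝ => (1 + x) * Real.log (1 + x) :=
    Real.continuous_mul_log.comp (continuous_const.add continuous_id)
  have h2 : Continuous fun x : ℝ => (1 - x) * Real.log (1 - x) :=
    Real.continuous_mul_log.comp (continuous_const.sub continuous_id)
  exact continuous_const.mul (h1.add h2)

/-- For `λ > 2`, `a ∈ (0,1/2)`, if `λ ≤ 2/(1-2a)` (i.e. `d_λ = 1 - 2/λ ≤ 2a`), then the
maximum over `d ∈ [2a,1]` of `F(λ)(1 - 2a/d) - (2a/d)q(d)` is attained at `d = 2a` and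
equals `-q(2a)`. -/
theorem max_at_two_a (a lam : ℝ) (ha : a ∈ Set.Ioo (0 : ℝ) (1 / 2))
    (hlam : 2 < lam) (hd : 1 - 2 / lam ≤ 2 * a) :
    IsMaxOn (fun d => freeEn lam * (1 - 2 * a / d) - (2 * a / d) * entq d)
        (Set.Icc (2 * a) 1) (2 * a) ∧
      freeEn lam * (1 - 2 * a / (2 * a)) - (2 * a / (2 * a)) * entq (2 * a)
        = -entq (2 * a) := by
  obtain ⟨ha0, ha12⟩ := ha
  have h2a0 : 0 < 2 * a := by linarith
  have h2a1 : 2 * a < 1 := by linarith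
  have hp2a : (0:ℝ) < 1 + 2 * a := by linarith
  have hm2a : (0:ℝ) < 1 - 2 * a := by linarith
  set R : ℝ := (1 / 2) * (Real.log (1 + 2 * a) - Real.log (1 - 2 * a)) with hR
  -- bound on freeEn lam
  have hlam1 : (0:ℝ) < lam - 1 := by linarith
  have hquad : lam ^ 2 * (1 - 4 * a ^ 2) ≤ 4 * (lam - 1) := by
    have h1 : 2 - lam * (1 - 2 * a) ≥ 0 := by
      have h0 : 1 - 2 * a ≤ 2 / lam := by linarith
      rw [le_div_iff₀ (by linarith : (0:ℝ) < lam)] at h0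
      linarith
    have h2 : lam * (1 + 2 * a) - 2 > 0 := by nlinarith
    nlinarith [mul_nonneg h1 h2.le]
  have hsq : lam * Real.sqrt (1 - 4 * a ^ 2) ≤ 2 * Real.sqrt (lam - 1) := by
    have e1 : lam * Real.sqrt (1 - 4 * a ^ 2) = Real.sqrt (lam ^ 2 * (1 - 4 * a ^ 2)) := by
      rw [Real.sqrt_mul (by positivity), Real.sqrt_sq (by linarith)]
    have e2 : 2 * Real.sqrt (lam - 1) = Real.sqrt (4 * (lam - 1)) := by
      rw [show (4:ℝ) * (lam - 1) = 2^2 * (lam - 1) by ring, Real.sqrt_mul (by positivity),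
        Real.sqrt_sq (by norm_num)]
    rw [e1, e2]
    exact Real.sqrt_le_sqrt hquad
  have hFB : freeEn lam ≤ 2 * a * R - entq (2 * a) := by
    have h4a : (0:ℝ) < 1 - 4 * a ^ 2 := by nlinarith
    have hB : 2 * a * R - entq (2 * a) = -((1/2) * Real.log (1 - 4 * a ^ 2)) := by
      have : (1:ℝ) - 4 * a ^ 2 = (1 + 2*a) * (1 - 2*a) := by ring
      rw [this, Real.log_mul hp2a.ne' hm2a.ne']
      simp only [entq, hR]; ring
    rw [hB]
    have hs4 : Real.sqrt (1 - 4 * a ^ 2) > 0 := Real.sqrt_pos.2 h4a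
    have hsl : Real.sqrt (lam - 1) > 0 := Real.sqrt_pos.2 hlam1
    have harg : lam / (2 * Real.sqrt (lam - 1)) ≤ 1 / Real.sqrt (1 - 4 * a ^ 2) := by
      rw [div_le_div_iff₀ (by positivity) (by positivity)]
      nlinarith
    have := Real.log_le_log (by positivity) harg
    rw [Real.log_div one_ne_zero hs4.ne', Real.log_one,
      Real.log_sqrt h4a.le] at this
    simp only [freeEn]
    linarith
  -- tangent line inequality
  have htangent : ∀ d ∈ Set.Icc (2 * a) 1, entq (2 * a) + R * (d - 2 * a) ≤ entq d := by
    have hmono : MonotoneOn (fun x => entq x - R * x) (Set.Icc (2 * a) 1) := by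
      apply monotoneOn_of_deriv_nonneg (convex_Icc _ _)
      · exact (entq_continuous.sub (continuous_const.mul continuous_id)).continuousOn
      · intro x hx
        rw [interior_Icc] at hx
        obtain ⟨hx1, hx2⟩ := hx
        have dR : HasDerivAt (fun y : ℝ => R * y) R x := by
          simpa using (hasDerivAt_id x).const_mul R
        exact ((entq_hasDerivAt (by linarith) hx2).sub
          dR).differentiableAt.differentiableWithinAt
      · intro x hx
        rw [interior_Icc] at hx
        obtain ⟨hx1, hx2⟩ := hx
        have dR : HasDerivAt (fun y : ℝ => R * y) R x := by
          simpa using (hasDerivAt_id x).const_mul R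
        have hder := ((entq_hasDerivAt (by linarith) hx2).sub dR).deriv
        rw [show (fun x => entq x - R * x) = (entq - fun y => R * y) from rfl, hder]
        have l1 : Real.log (1 + 2 * a) ≤ Real.log (1 + x) :=
          Real.log_le_log hp2a (by linarith)
        have l2 : Real.log (1 - x) ≤ Real.log (1 - 2 * a) :=
          Real.log_le_log (by linarith) (by linarith)
        simp only [hR]
        linarith
    intro d hdm
    have h2am : (2 * a) ∈ Set.Icc (2 * a) 1 := ⟨le_refl _, h2a1.le⟩
    have := hmono h2am hdm hdm.1
    dsimp only at this
    linarith
  constructor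
  · intro d hdm
    obtain ⟨hd1, hd2⟩ := hdm
    have hd0 : 0 < d := lt_of_lt_of_le h2a0 hd1
    have hq := htangent d ⟨hd1, hd2⟩
    simp only [Set.mem_setOf_eq]
    have e2a : 2 * a / (2 * a) = 1 := div_self h2a0.ne'
    rw [e2a]
    have e1 : freeEn lam * (1 - 2 * a / d) - (2 * a / d) * entq d
        = (freeEn lam * (d - 2 * a) - 2 * a * entq d) / d := by
      field_simp
    rw [e1]
    rw [div_le_iff₀ hd0]
    have hda : 0 ≤ d - 2 * a := by linarith
    nlinarith [mul_le_mul_of_nonneg_right hFB hda, mul_le_mul_of_nonneg_left hq h2a0.le]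
  · have e2a : 2 * a / (2 * a) = 1 := div_self h2a0.ne'
    rw [e2a]; ring
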